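/- Let q ≥ 3 and let A be the (q(q−1)/2) × (q+1) real matrix formed by stacking blocks A₁,…,A_{q−1}, where A_k is (q−k) × (q+1) with (i,j) entry equal to 1 if j = 1, j = k+1, or j = i+k+1, and 0 otherwise. Then rank(A) = q. -/
import Mathlib


open Matrix

/-- Row index set for the stacked blocks `A₁, …, A_{q−1}`: pairs `(k, i)`
with `1 ≤ k`, `1 ≤ i` and `i ≤ q − k` (so the block `A_k` has `q − k` rows). -/
def RIdx (q : ℕ) :=
  {p : Fin q × Fin q // 1 ≤ (p.1 : ℕ) ∧ 1 ≤ (p.2 : ℕ) ∧ (p.2 : ℕ) ≤ q - (p.1 : ℕ)}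

instance (q : ℕ) : Fintype (RIdx q) := by unfold RIdx; infer_instance

/-- The 0-1 matrix `A`: row `(k, i)` has ones exactly in the (1-based) columns
`1`, `k+1` and `i+k+1`, i.e. the 0-based columns `0`, `k` and `i+k`. -/
def Abig (q : ℕ) : Matrix (RIdx q) (Fin (q + 1)) ℝ := fun p j =>
  if (j : ℕ) = 0 ∨ (j : ℕ) = (p.1.1 : ℕ) ∨ (j : ℕ) = (p.1.2 : ℕ) + (p.1.1 : ℕ)
  then 1 else 0

/-- The kernel vector `(-2, 1, 1, …, 1)`. -/
def vker (q : ℕ) : Fin (q + 1) → ℝ := fun j => if (j : ℕ) = 0 then -2 else 1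

lemma RIdx_sum_le (q : ℕ) (p : RIdx q) : (p.1.2 : ℕ) + (p.1.1 : ℕ) ≤ q := by
  have h := p.2.2.2
  have hk := p.2.1
  have hkq : (p.1.1 : ℕ) < q := p.1.1.2
  omega

lemma Abig_mulVec (q : ℕ) (x : Fin (q + 1) → ℝ) (p : RIdx q) :
    (Abig q).mulVec x p =
      x 0 + x ⟨(p.1.1 : ℕ), Nat.lt_succ_of_lt p.1.1.2⟩ +
        x ⟨(p.1.2 : ℕ) + (p.1.1 : ℕ), Nat.lt_succ_of_le (RIdx_sum_le q p)⟩ := by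
  classical
  obtain ⟨hk, hi, hle⟩ := p.2
  have hsum := RIdx_sum_le q p
  have hk' : (p.1.1 : ℕ) < q + 1 := Nat.lt_succ_of_lt p.1.1.2
  have hik : (p.1.2 : ℕ) + (p.1.1 : ℕ) < q + 1 := Nat.lt_succ_of_le hsum
  rw [Matrix.mulVec, dotProduct]
  have key : ∀ j : Fin (q + 1), Abig q p j * x j =
      if j ∈ ({(0 : Fin (q + 1)), ⟨(p.1.1 : ℕ), hk'⟩, ⟨(p.1.2 : ℕ) + (p.1.1 : ℕ), hik⟩} :
          Finset (Fin (q + 1))) then x j else 0 := by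
    intro j
    simp only [Abig, Finset.mem_insert, Finset.mem_singleton]
    by_cases h : (j : ℕ) = 0 ∨ (j : ℕ) = (p.1.1 : ℕ) ∨ (j : ℕ) = (p.1.2 : ℕ) + (p.1.1 : ℕ)
    · rw [if_pos h, if_pos, one_mul]
      rcases h with h | h | h
      · exact Or.inl (Fin.ext h)
      · exact Or.inr (Or.inl (Fin.ext h))
      · exact Or.inr (Or.inr (Fin.ext h))
    · rw [if_neg h, if_neg, zero_mul]
      intro hc
      apply h
      rcases hc with hc | hc | hc
      · exact Or.inl (congrArg Fin.val hc)
      · exact Or.inr (Or.inl (congrArg Fin.val hc))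
      · exact Or.inr (Or.inr (congrArg Fin.val hc))
  have h0k : (0 : Fin (q + 1)) ≠ ⟨(p.1.1 : ℕ), hk'⟩ := by
    intro hc; have := congrArg Fin.val hc; simp only [Fin.val_zero, Fin.val_mk] at this; omega
  have h0ik : (0 : Fin (q + 1)) ≠ ⟨(p.1.2 : ℕ) + (p.1.1 : ℕ), hik⟩ := by
    intro hc; have := congrArg Fin.val hc; simp only [Fin.val_zero, Fin.val_mk] at this; omega
  have hkik : (⟨(p.1.1 : ℕ), hk'⟩ : Fin (q + 1)) ≠ ⟨(p.1.2 : ℕ) + (p.1.1 : ℕ), hik⟩ := by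
    intro hc; have := congrArg Fin.val hc; simp only [Fin.val_mk] at this; omega
  rw [Finset.sum_congr rfl (fun j _ => key j), Finset.sum_ite_mem, Finset.univ_inter,
    Finset.sum_insert (by simp [h0k, h0ik]),
    Finset.sum_insert (by simp [hkik]), Finset.sum_singleton]
  exact (add_assoc (x 0) _ _).symm

/-- for `q ≥ 3` the matrix `A` has rank `q`. -/
theorem Abig_rank (q : ℕ) (hq : 3 ≤ q) : (Abig q).rank = q := by
  classical
  have hker : LinearMap.ker (Abig q).mulVecLin = Submodule.span ℝ {vker q} := by
    apply le_antisymm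
    · intro x hx
      rw [LinearMap.mem_ker] at hx
      have hx' : (Abig q).mulVec x = 0 := by rw [← Matrix.mulVecLin_apply]; exact hx
      -- nat-indexed version of x
      set X : ℕ → ℝ := fun j => if h : j < q + 1 then x ⟨j, h⟩ else 0 with hX
      have hXeq : ∀ (j : ℕ) (h : j < q + 1), x ⟨j, h⟩ = X j := by
        intro j h; simp only [hX, dif_pos h]
      have hrow : ∀ k i : ℕ, 1 ≤ k → 1 ≤ i → i + k ≤ q →
          X 0 + X k + X (i + k) = 0 := by
        intro k i hk hi hik
        have h3 := congrFun hx'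
          ⟨(⟨k, by omega⟩, ⟨i, by omega⟩), show 1 ≤ k from hk, show 1 ≤ i from hi,
            show i ≤ q - k by omega⟩
        have h2 := (Abig_mulVec q x _).symm.trans h3
        rw [← hXeq 0 (by omega), ← hXeq k (by omega), ← hXeq (i + k) (by omega)]
        exact h2
      have h2j : ∀ j : ℕ, 2 ≤ j → j ≤ q → X j = X 2 := by
        intro j h2 hjq
        have ha := hrow 1 (j - 1) le_rfl (by omega) (by omega)
        rw [show j - 1 + 1 = j by omega] at ha
        have hb := hrow 1 1 le_rfl le_rfl (by omega)
        norm_num at hb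
        linarith
      have h0 : X 0 = -2 * X 2 := by
        have ha := hrow 2 1 (by omega) le_rfl (by omega)
        norm_num at ha
        have h3 := h2j 3 (by omega) (by omega)
        linarith
      have h1 : X 1 = X 2 := by
        have hb := hrow 1 1 le_rfl le_rfl (by omega)
        norm_num at hb
        linarith
      have hx_eq : x = X 2 • vker q := by
        funext j
        rcases j with ⟨j, hj⟩
        rw [hXeq j hj]
        simp only [Pi.smul_apply, vker, Fin.val_mk, smul_eq_mul]
        rcases Nat.eq_zero_or_pos j with h | h
        · subst h; rw [if_pos rfl, h0]; ring
        · rw [if_neg (by omega)]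
          rcases Nat.lt_or_ge j 2 with h2 | h2
          · rw [show j = 1 by omega, h1]; ring
          · rw [h2j j h2 (by omega)]; ring
      rw [hx_eq]
      exact Submodule.smul_mem _ _ (Submodule.mem_span_singleton_self _)
    · rw [Submodule.span_le, Set.singleton_subset_iff, SetLike.mem_coe,
        LinearMap.mem_ker, Matrix.mulVecLin_apply]
      funext p
      rw [Abig_mulVec]
      obtain ⟨hk, hi, hle⟩ := p.2
      have hv0 : vker q 0 = -2 := by simp [vker]
      have hvk : vker q ⟨(p.1.1 : ℕ), Nat.lt_succ_of_lt p.1.1.2⟩ = 1 := by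
        simp only [vker, Fin.val_mk]
        rw [if_neg (by omega)]
      have hvik : vker q ⟨(p.1.2 : ℕ) + (p.1.1 : ℕ), Nat.lt_succ_of_le (RIdx_sum_le q p)⟩ = 1 := by
        simp only [vker, Fin.val_mk]
        rw [if_neg (by omega)]
      rw [hv0, hvk, hvik]
      norm_num
  have hv_ne : vker q ≠ 0 := by
    intro h
    have := congrFun h 0
    simp [vker] at this
  have hfr : Module.finrank ℝ (LinearMap.ker (Abig q).mulVecLin) = 1 := by
    rw [hker, finrank_span_singleton hv_ne]
  have hrn := LinearMap.finrank_range_add_finrank_ker (Abig q).mulVecLin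
  rw [hfr, Module.finrank_fin_fun] at hrn
  have hrank : (Abig q).rank = Module.finrank ℝ (LinearMap.range (Abig q).mulVecLin) := rfl
  omega
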